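/- Let x* ∈ ℝ_{>0}^n be a complex balanced steady state of a GLV system with stoichiometric subspace S. Then a point z ∈ ℝ_{>0}^n is a positive steady state of the GLV system if and only if log z - log x* ∈ S^⊥; moreover, every positive steady state is complex balanced. -/

import Mathlib

/-!
Write `z = x* · exp μ` coordinatewise. Then `z ^ y_i = x* ^ y_i · exp θ_i` with `θ_i = ⟪y_i, μ⟫`,
so the GLV field at `z` is `∑ₑ bₑ exp θ_{s e} (y_{t e} - y_{s e})`, where the fluxes
`bₑ = κₑ x* ^ y_{s e}` are balanced at every vertex. If `θ` is constant along edges, balance makes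
this sum vanish and keeps the rescaled fluxes `bₑ exp θ_{s e}` balanced, i.e. `z` is complex
balanced. Conversely, pairing a vanishing field with `μ` gives `∑ₑ bₑ exp θ_s (θ_t - θ_s) = 0`,
while balance gives `∑ₑ bₑ (exp θ_t - exp θ_s) = 0`; by strict convexity of `exp` every edge term
of the difference is nonnegative and vanishes only if `θ_s = θ_t`. Finally, `θ` is constant along
edges exactly when `μ ∈ Sᗮ`.
-/

open scoped RealInnerProductSpace

open Finset Real

theorem exp_mul_sub_le_exp_sub_exp (a b : ℝ) : exp a * (b - a) ≤ exp b - exp a := by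
  have := mul_le_mul_of_nonneg_left (add_one_le_exp (b - a)) (exp_pos a).le
  rw [mul_add, mul_one, ← exp_add, add_sub_cancel] at this
  linarith

theorem exp_mul_sub_lt_exp_sub_exp {a b : ℝ} (h : a ≠ b) : exp a * (b - a) < exp b - exp a := by
  have := mul_lt_mul_of_pos_left (add_one_lt_exp (sub_ne_zero.mpr h.symm)) (exp_pos a)
  rw [mul_add, mul_one, ← exp_add, add_sub_cancel] at this
  linarith

def IsBalancedFlux {ι R : Type*} [DecidableEq ι] [AddCommMonoid R] (E : Finset (ι × ι))
    (b : ι × ι → R) : Prop :=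
  ∀ i, ∑ e ∈ E with e.1 = i, b e = ∑ e ∈ E with e.2 = i, b e

section Flux

variable {ι : Type*} [DecidableEq ι] {E : Finset (ι × ι)}

theorem sum_smul_comp_eq_sum_fiber [Fintype ι] {R M : Type*} [Semiring R] [AddCommMonoid M]
    [Module R M] (b : ι × ι → R) (g : ι × ι → ι) (w : ι → M) :
    ∑ e ∈ E, b e • w (g e) = ∑ i, (∑ e ∈ E with g e = i, b e) • w i := by
  rw [← E.sum_fiberwise g]
  refine sum_congr rfl fun i _ => ?_
  rw [sum_smul]
  exact sum_congr rfl fun e he => by rw [(mem_filter.mp he).2]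

theorem IsBalancedFlux.sum_smul_fst_eq_sum_smul_snd [Fintype ι] {R M : Type*} [Semiring R]
    [AddCommMonoid M] [Module R M] {b : ι × ι → R} (hb : IsBalancedFlux E b) (w : ι → M) :
    ∑ e ∈ E, b e • w e.1 = ∑ e ∈ E, b e • w e.2 := by
  rw [sum_smul_comp_eq_sum_fiber b Prod.fst, sum_smul_comp_eq_sum_fiber b Prod.snd]
  exact sum_congr rfl fun i _ => by rw [hb i]

theorem IsBalancedFlux.mul_fst {R : Type*} [CommSemiring R] {b : ι × ι → R}
    (hb : IsBalancedFlux E b) {c : ι → R} (hc : ∀ e ∈ E, c e.1 = c e.2) :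
    IsBalancedFlux E fun e => b e * c e.1 := fun i => by
  calc ∑ e ∈ E with e.1 = i, b e * c e.1
      = (∑ e ∈ E with e.1 = i, b e) * c i := by
        rw [sum_mul]
        exact sum_congr rfl fun e he => by rw [(mem_filter.mp he).2]
    _ = (∑ e ∈ E with e.2 = i, b e) * c i := by rw [hb i]
    _ = ∑ e ∈ E with e.2 = i, b e * c e.1 := by
        rw [sum_mul]
        refine sum_congr rfl fun e he => ?_
        obtain ⟨heE, rfl⟩ := mem_filter.mp he
        rw [hc e heE]

theorem IsBalancedFlux.eq_of_sum_exp_mul_sub_nonneg [Fintype ι] {b : ι × ι → ℝ}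
    (hb : IsBalancedFlux E b) (hpos : ∀ e ∈ E, 0 < b e) {θ : ι → ℝ}
    (h : 0 ≤ ∑ e ∈ E, b e * exp (θ e.1) * (θ e.2 - θ e.1)) : ∀ e ∈ E, θ e.1 = θ e.2 := by
  set d : ι × ι → ℝ := fun e => b e * (exp (θ e.2) - exp (θ e.1) - exp (θ e.1) * (θ e.2 - θ e.1))
  have hd_nonneg : ∀ e ∈ E, 0 ≤ d e := fun e he =>
    mul_nonneg (hpos e he).le (sub_nonneg.mpr (exp_mul_sub_le_exp_sub_exp _ _))
  have hsum : ∑ e ∈ E, d e = -∑ e ∈ E, b e * exp (θ e.1) * (θ e.2 - θ e.1) := by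
    have hexp := hb.sum_smul_fst_eq_sum_smul_snd fun i => exp (θ i)
    simp only [smul_eq_mul] at hexp
    simp only [d, mul_sub, sum_sub_distrib, hexp, mul_assoc]
    ring
  have hd_zero := (sum_eq_zero_iff_of_nonneg hd_nonneg).mp
    (le_antisymm (by linarith) (sum_nonneg hd_nonneg))
  intro e he
  by_contra hne
  have := mul_pos (hpos e he) (sub_pos.mpr (exp_mul_sub_lt_exp_sub_exp hne))
  linarith [hd_zero e he]

theorem IsBalancedFlux.sum_mul_exp_inner_smul_eq_zero_iff [Fintype ι] {V : Type*}
    [NormedAddCommGroup V] [InnerProductSpace ℝ V] {b : ι × ι → ℝ} (hb : IsBalancedFlux E b)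
    (hpos : ∀ e ∈ E, 0 < b e) (y : ι → V) (μ : V) :
    ∑ e ∈ E, (b e * exp ⟪y e.1, μ⟫) • (y e.2 - y e.1) = 0 ↔
      ∀ e ∈ E, ⟪y e.1, μ⟫ = ⟪y e.2, μ⟫ := by
  constructor
  · intro h
    refine hb.eq_of_sum_exp_mul_sub_nonneg hpos (θ := fun i => ⟪y i, μ⟫) (le_of_eq ?_)
    have := congrArg (⟪·, μ⟫) h
    simpa only [sum_inner, real_inner_smul_left, inner_sub_left, inner_zero_left, eq_comm]
      using this
  · intro hθ
    calc ∑ e ∈ E, (b e * exp ⟪y e.1, μ⟫) • (y e.2 - y e.1)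
        = ∑ e ∈ E, b e • (exp ⟪y e.2, μ⟫ • y e.2)
            - ∑ e ∈ E, b e • (exp ⟪y e.1, μ⟫ • y e.1) := by
          rw [← sum_sub_distrib]
          refine sum_congr rfl fun e he => ?_
          rw [smul_sub, mul_smul, mul_smul, hθ e he]
      _ = 0 := sub_eq_zero.mpr (hb.sum_smul_fst_eq_sum_smul_snd fun i => exp ⟪y i, μ⟫ • y i).symm

end Flux

theorem mem_orthogonal_span_iff {𝕜 V : Type*} [RCLike 𝕜] [NormedAddCommGroup V]
    [InnerProductSpace 𝕜 V] {s : Set V} {μ : V} :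
    μ ∈ (Submodule.span 𝕜 s)ᗮ ↔ ∀ u ∈ s, inner 𝕜 u μ = 0 := by
  rw [← Submodule.span_singleton_le_iff_mem, ← Submodule.isOrtho_iff_le, Submodule.isOrtho_comm,
    Submodule.isOrtho_span]
  simp

theorem forall_mul_apply_eq_zero_iff {ι : Type*} {z v : EuclideanSpace ℝ ι} (hz : ∀ k, 0 < z k) :
    (∀ k, z k * v k = 0) ↔ v = 0 := by
  simp [(hz _).ne', ← WithLp.ofLp_eq_zero, funext_iff]

theorem prod_rpow_eq_prod_rpow_mul_exp_inner {ι : Type*} [Fintype ι] {x z : EuclideanSpace ℝ ι}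
    (hx : ∀ k, 0 < x k) (hz : ∀ k, 0 < z k) (v : EuclideanSpace ℝ ι) :
    ∏ k, z k ^ v k =
      (∏ k, x k ^ v k) * exp ⟪v, WithLp.toLp 2 (fun k => log (z k) - log (x k))⟫ := by
  simp only [rpow_def_of_pos (hx _), rpow_def_of_pos (hz _), ← exp_sum, ← exp_add,
    PiLp.inner_apply, ← sum_add_distrib]
  congr 1
  refine sum_congr rfl fun k _ => ?_
  simp only [RCLike.inner_apply, ringHom_apply]
  ring

section GLV

variable {ι σ : Type*} [Fintype σ]

noncomputable def glvFlux (κ : ι × ι → ℝ) (y : ι → EuclideanSpace ℝ σ) (x : EuclideanSpace ℝ σ)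
    (e : ι × ι) : ℝ :=
  κ e * ∏ k, x k ^ y e.1 k

theorem isBalancedFlux_glvFlux_iff [DecidableEq ι] (E : Finset (ι × ι)) (κ : ι × ι → ℝ)
    (y : ι → EuclideanSpace ℝ σ) (x : EuclideanSpace ℝ σ) :
    IsBalancedFlux E (glvFlux κ y x) ↔ ∀ i,
      ∑ e ∈ E with e.1 = i, κ e * ∏ k, x k ^ y i k =
        ∑ e ∈ E with e.2 = i, κ e * ∏ k, x k ^ y e.1 k := by
  refine forall_congr' fun i => ?_
  rw [sum_congr rfl fun e he => by rw [glvFlux, (mem_filter.mp he).2]]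
  rfl

theorem glvFlux_eq_mul_exp_inner {x z : EuclideanSpace ℝ σ} (hx : ∀ k, 0 < x k)
    (hz : ∀ k, 0 < z k) (κ : ι × ι → ℝ) (y : ι → EuclideanSpace ℝ σ) :
    glvFlux κ y z =
      fun e => glvFlux κ y x e * exp ⟪y e.1, WithLp.toLp 2 (fun k => log (z k) - log (x k))⟫ := by
  funext e
  rw [glvFlux, glvFlux, prod_rpow_eq_prod_rpow_mul_exp_inner hx hz, mul_assoc]

theorem glvFlux_pos {E : Finset (ι × ι)} {κ : ι × ι → ℝ} (hκ : ∀ e ∈ E, 0 < κ e)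
    (y : ι → EuclideanSpace ℝ σ) {x : EuclideanSpace ℝ σ} (hx : ∀ k, 0 < x k) :
    ∀ e ∈ E, 0 < glvFlux κ y x e := fun e he =>
  mul_pos (hκ e he) (prod_pos fun k _ => rpow_pos_of_pos (hx k) _)

end GLV

theorem glv_steady_state_iff_and_cb_general {n m : ℕ}
    (y : Fin m → EuclideanSpace ℝ (Fin n))
    (E : Finset (Fin m × Fin m))
    (κ : Fin m × Fin m → ℝ) (hκ : ∀ e ∈ E, 0 < κ e)
    (S : Submodule ℝ (EuclideanSpace ℝ (Fin n)))
    (hS : S = Submodule.span ℝ {v : EuclideanSpace ℝ (Fin n) | ∃ e ∈ E, v = y e.2 - y e.1})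
    (f : EuclideanSpace ℝ (Fin n) → EuclideanSpace ℝ (Fin n))
    (hf : ∀ x, f x = ∑ e ∈ E, (κ e * ∏ k, x k ^ (y e.1 k)) • (y e.2 - y e.1))
    (xs : EuclideanSpace ℝ (Fin n)) (hxs : ∀ k, 0 < xs k)
    (hcb : ∀ i : Fin m,
      ∑ e ∈ E.filter (fun e => e.1 = i), κ e * ∏ k, xs k ^ (y i k) =
      ∑ e ∈ E.filter (fun e => e.2 = i), κ e * ∏ k, xs k ^ (y e.1 k)) :
    ∀ z : EuclideanSpace ℝ (Fin n), (∀ k, 0 < z k) →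
      (((∀ k, z k * f z k = 0) ↔
        (WithLp.toLp 2 (fun k => Real.log (z k) - Real.log (xs k)) : EuclideanSpace ℝ (Fin n)) ∈ Sᗮ) ∧
      ((∀ k, z k * f z k = 0) →
        ∀ i : Fin m,
          ∑ e ∈ E.filter (fun e => e.1 = i), κ e * ∏ k, z k ^ (y i k) =
          ∑ e ∈ E.filter (fun e => e.2 = i), κ e * ∏ k, z k ^ (y e.1 k))) := by
  intro z hz
  have hflux := glvFlux_eq_mul_exp_inner hxs hz κ y
  set μ : EuclideanSpace ℝ (Fin n) := WithLp.toLp 2 fun k => log (z k) - log (xs k)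
  have hbal := (isBalancedFlux_glvFlux_iff E κ y xs).mpr hcb
  have hsteady : (∀ k, z k * f z k = 0) ↔ ∀ e ∈ E, ⟪y e.1, μ⟫ = ⟪y e.2, μ⟫ := by
    have hfz : f z = ∑ e ∈ E, glvFlux κ y z e • (y e.2 - y e.1) := hf z
    simp only [forall_mul_apply_eq_zero_iff hz, hfz, hflux]
    exact hbal.sum_mul_exp_inner_smul_eq_zero_iff (glvFlux_pos hκ y hxs) y μ
  have horth : μ ∈ Sᗮ ↔ ∀ e ∈ E, ⟪y e.1, μ⟫ = ⟪y e.2, μ⟫ := by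
    rw [hS, mem_orthogonal_span_iff]
    refine ⟨fun h e he => ?_, fun h u ⟨e, he, hu⟩ => ?_⟩
    · exact (sub_eq_zero.mp ((inner_sub_left _ _ _).symm.trans (h _ ⟨e, he, rfl⟩))).symm
    · rw [hu, inner_sub_left, h e he, sub_self]
  refine ⟨hsteady.trans horth.symm, fun h => ?_⟩
  rw [← isBalancedFlux_glvFlux_iff, hflux]
  exact hbal.mul_fst (c := fun i => exp ⟪y i, μ⟫) fun e he => congrArg exp (hsteady.mp h e he)

theorem glv_steady_state_iff_and_cb {n m : ℕ}
    (y : Fin m → EuclideanSpace ℝ (Fin n))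
    (E : Finset (Fin m × Fin m)) (hE : ∀ e ∈ E, e.1 ≠ e.2)
    (κ : Fin m × Fin m → ℝ) (hκ : ∀ e ∈ E, 0 < κ e)
    (S : Submodule ℝ (EuclideanSpace ℝ (Fin n)))
    (hS : S = Submodule.span ℝ {v : EuclideanSpace ℝ (Fin n) | ∃ e ∈ E, v = y e.2 - y e.1})
    (f : EuclideanSpace ℝ (Fin n) → EuclideanSpace ℝ (Fin n))
    (hf : ∀ x, f x = ∑ e ∈ E, (κ e * ∏ k, x k ^ (y e.1 k)) • (y e.2 - y e.1))
    (xs : EuclideanSpace ℝ (Fin n)) (hxs : ∀ k, 0 < xs k)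
    (hcb : ∀ i : Fin m,
      ∑ e ∈ E.filter (fun e => e.1 = i), κ e * ∏ k, xs k ^ (y i k) =
      ∑ e ∈ E.filter (fun e => e.2 = i), κ e * ∏ k, xs k ^ (y e.1 k)) :
    ∀ z : EuclideanSpace ℝ (Fin n), (∀ k, 0 < z k) →
      (((∀ k, z k * f z k = 0) ↔
        (WithLp.toLp 2 (fun k => Real.log (z k) - Real.log (xs k)) : EuclideanSpace ℝ (Fin n)) ∈ Sᗮ) ∧
      ((∀ k, z k * f z k = 0) →
        ∀ i : Fin m,
          ∑ e ∈ E.filter (fun e => e.1 = i), κ e * ∏ k, z k ^ (y i k) =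
          ∑ e ∈ E.filter (fun e => e.2 = i), κ e * ∏ k, z k ^ (y e.1 k))) :=
  glv_steady_state_iff_and_cb_general y E κ hκ S hS f hf xs hxs hcb
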